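/- Let c > 0, D > 0, and let ν be a Borel measure on (0,∞) with m := ∫₀^∞ z ν(dz) < ∞ and Π(x) := ν((x,∞)); set ν̄_I(x) = ∫_x^∞ Π(z) dz. Suppose 0 < γ < c/D and ∫₀^∞ (e^{γ z} − 1) ν(dz) < ∞. With k_D(x) = (c/D) e^{−(c/D) x} and h(u) = (1/c) ∫₀^u k_D(u − x) ν̄_I(x) dx + e^{−(c/D) u}, one has ∫₀^∞ e^{γ x} h(x) dx = (1/(γ (c − D γ))) [ (1/γ) ∫₀^∞ (e^{γ z} − 1) ν(dz) − m ] + D/(c − D γ). In particular, if additionally the Lundberg identity c γ − D γ² = ∫₀^∞ (e^{γ z} − 1) ν(dz) holds, then ∫₀^∞ e^{γ x} h(x) dx = (c − m)/(γ (c − D γ)). -/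

import Mathlib

/-! All integrands are nonnegative, so we compute in `ℝ≥0∞`, where Tonelli needs no
integrability side conditions. The Laplace transform at `γ` of the one-sided convolution
`k_D ⋆ ν̄_I` is the product of those of `k_D`, which is `(c/D)/(c/D - γ)`, and of `ν̄_I`.
By the layer-cake formula `ν̄_I(t) = ∫ (w - t)⁺ ν(dw)`, so swapping the integrals turns the
transform of `ν̄_I` into `∫ ∫₀^w e^{γt} (w - t) dt ν(dw) = ∫ (e^{γw} - 1 - γw) / γ² ν(dw)`. -/

open MeasureTheory Set

/-- The tail of the Lévy measure `ν`: `Π(x) = ν((x,∞))`. -/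
noncomputable def nuTail (ν : Measure ℝ) (x : ℝ) : ℝ := (ν (Ioi x)).toReal

/-- The integrated tail `ν̄_I(x) = ∫_x^∞ Π(z) dz`. -/
noncomputable def nuIbar (ν : Measure ℝ) (x : ℝ) : ℝ := ∫ z in Ioi x, nuTail ν z

/-- The exponential density `k_D(x) = (c/D) e^{−(c/D)x}`. -/
noncomputable def kDens (c D x : ℝ) : ℝ := (c / D) * Real.exp (-(c / D) * x)

/-- The inhomogeneous term of the defective renewal equation:
`h(u) = (1/c) ∫₀^u k_D(u−x) ν̄_I(x) dx + e^{−(c/D)u}`. -/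
noncomputable def renH (c D : ℝ) (ν : Measure ℝ) (u : ℝ) : ℝ :=
  (1 / c) * (∫ x in (0 : ℝ)..u, kDens c D (u - x) * nuIbar ν x) + Real.exp (-(c / D) * u)

open scoped ENNReal

lemma setLIntegral_measure_Ioi (ν : Measure ℝ) (x : ℝ) :
    ∫⁻ z in Ioi x, ν (Ioi z) = ∫⁻ w, ENNReal.ofReal (w - x) ∂ν := by
  have h := lintegral_eq_lintegral_meas_lt ν (f := fun w => max (w - x) 0)
    (ae_of_all _ fun _ => le_max_right _ _) (by fun_prop)
  simp only [ENNReal.ofReal_max, ENNReal.ofReal_zero, max_eq_left zero_le] at h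
  rw [h, ← (measurePreserving_add_right volume x).setLIntegral_comp_preimage_emb
    (measurableEmbedding_addRight x), preimage_add_const_Ioi, sub_self]
  refine setLIntegral_congr_fun measurableSet_Ioi fun t ht => congrArg ν ?_
  ext w
  simp [(mem_Ioi.1 ht).not_gt, lt_sub_iff_add_lt, add_comm]

lemma measurable_measure_Ioi (ν : Measure ℝ) : Measurable fun z : ℝ => ν (Ioi z) :=
  Antitone.measurable fun _ _ hab => measure_mono (Ioi_subset_Ioi hab)

lemma measurable_nuIbar (ν : Measure ℝ) : Measurable (nuIbar ν) := by
  have h : StronglyMeasurable (Function.uncurry fun x z => (Ioi x).indicator (nuTail ν) z) :=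
    (((measurable_measure_Ioi ν).ennreal_toReal.comp measurable_snd).indicator
      (measurableSet_lt measurable_fst measurable_snd)).stronglyMeasurable
  convert (h.integral_prod_right' (ν := volume)).measurable using 1
  ext x
  exact (integral_indicator measurableSet_Ioi).symm

lemma nuIbar_nonneg (ν : Measure ℝ) (x : ℝ) : 0 ≤ nuIbar ν x :=
  integral_nonneg fun _ => ENNReal.toReal_nonneg

lemma integral_exp_mul_mul_sub {γ : ℝ} (hγ : γ ≠ 0) (w : ℝ) :
    ∫ t in (0 : ℝ)..w, Real.exp (γ * t) * (w - t) = (Real.exp (γ * w) - 1 - γ * w) / γ ^ 2 := by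
  have hF (t : ℝ) : HasDerivAt (fun t => Real.exp (γ * t) * (γ * (w - t) + 1) / γ ^ 2)
      (Real.exp (γ * t) * (w - t)) t := by
    have := ((((hasDerivAt_id t).const_mul γ).exp).mul
      ((((hasDerivAt_id t).const_sub w).const_mul γ).add_const 1)).div_const (γ ^ 2)
    refine this.congr_deriv ?_
    simp only [id]
    field_simp
    ring
  rw [intervalIntegral.integral_eq_sub_of_hasDerivAt (fun t _ => hF t)
    (Continuous.intervalIntegrable (by fun_prop) _ _)]
  simp only [sub_self, mul_zero, zero_add, Real.exp_zero, sub_zero, one_mul]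
  ring

lemma lintegral_exp_mul_ofReal_sub {γ w : ℝ} (hγ : γ ≠ 0) (hw : 0 ≤ w) :
    ∫⁻ t in Ioi 0, ENNReal.ofReal (Real.exp (γ * t)) * ENNReal.ofReal (w - t)
      = ENNReal.ofReal ((Real.exp (γ * w) - 1 - γ * w) / γ ^ 2) := by
  have hvanish : ∫⁻ t in Ioi w, ENNReal.ofReal (Real.exp (γ * t)) * ENNReal.ofReal (w - t) = 0 :=
    setLIntegral_eq_zero measurableSet_Ioi fun t ht => by
      simp [ENNReal.ofReal_eq_zero.2 (sub_nonpos.2 (le_of_lt ht))]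
  rw [← Ioc_union_Ioi_eq_Ioi hw, lintegral_union measurableSet_Ioi Ioc_disjoint_Ioi_same, hvanish,
    add_zero, ← integral_exp_mul_mul_sub hγ, intervalIntegral.integral_of_le hw,
    ofReal_integral_eq_lintegral_ofReal (Continuous.integrableOn_Ioc (by fun_prop))
      ((ae_restrict_iff' measurableSet_Ioc).2 (ae_of_all _ fun t ht =>
        mul_nonneg (Real.exp_nonneg _) (sub_nonneg.2 ht.2)))]
  exact setLIntegral_congr_fun measurableSet_Ioc fun t _ =>
    (ENNReal.ofReal_mul (Real.exp_nonneg _)).symm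

section FirstMoment

variable {ν : Measure ℝ} (hm : IntegrableOn (fun z => z) (Ioi 0) ν)
include hm

lemma ofReal_nuIbar {x : ℝ} (hx : 0 ≤ x) :
    ENNReal.ofReal (nuIbar ν x) = ∫⁻ w in Ioi 0, ENNReal.ofReal (w - x) ∂ν := by
  have hlayer : ∫⁻ z in Ioi x, ν (Ioi z) = ∫⁻ w in Ioi 0, ENNReal.ofReal (w - x) ∂ν := by
    rw [setLIntegral_measure_Ioi, setLIntegral_eq_of_support_subset]
    intro w hw
    simp only [Function.mem_support, ne_eq, ENNReal.ofReal_eq_zero, not_le, sub_pos] at hw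
    exact mem_Ioi.2 (hx.trans_lt hw)
  have hfin : ∫⁻ w in Ioi 0, ENNReal.ofReal (w - x) ∂ν < ⊤ :=
    (lintegral_mono fun w => ENNReal.ofReal_le_ofReal (by linarith)).trans_lt
      hm.lintegral_lt_top
  rw [← hlayer] at hfin ⊢
  simp only [nuIbar, nuTail]
  rw [integral_toReal (measurable_measure_Ioi ν).aemeasurable
    (ae_lt_top (measurable_measure_Ioi ν) hfin.ne), ENNReal.ofReal_toReal hfin.ne]

lemma nuIbar_le {x : ℝ} (hx : 0 ≤ x) : nuIbar ν x ≤ ∫ z in Ioi 0, z ∂ν := by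
  have hpos : 0 ≤ᵐ[ν.restrict (Ioi 0)] fun z => z :=
    (ae_restrict_iff' measurableSet_Ioi).2 (ae_of_all _ fun z hz => le_of_lt hz)
  rw [← ENNReal.ofReal_le_ofReal_iff (integral_nonneg_of_ae hpos), ofReal_nuIbar hm hx,
    ofReal_integral_eq_lintegral_ofReal hm hpos]
  exact lintegral_mono fun w => ENNReal.ofReal_le_ofReal (by linarith)

variable {γ : ℝ} (hint : IntegrableOn (fun z => Real.exp (γ * z) - 1) (Ioi 0) ν)
include hint

lemma mul_integral_le_integral_exp_mul_sub_one :
    γ * ∫ z in Ioi 0, z ∂ν ≤ ∫ z in Ioi 0, (Real.exp (γ * z) - 1) ∂ν := by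
  rw [← integral_const_mul]
  exact integral_mono (hm.const_mul γ) hint fun z => by linarith [Real.add_one_le_exp (γ * z)]

lemma lintegral_exp_mul_nuIbar [SFinite ν] (hγ : γ ≠ 0) :
    ∫⁻ t in Ioi 0, ENNReal.ofReal (Real.exp (γ * t)) * ENNReal.ofReal (nuIbar ν t)
      = ENNReal.ofReal (((∫ z in Ioi 0, (Real.exp (γ * z) - 1) ∂ν)
          - γ * ∫ z in Ioi 0, z ∂ν) / γ ^ 2) := by
  have hφ : IntegrableOn (fun w => (Real.exp (γ * w) - 1 - γ * w) / γ ^ 2) (Ioi 0) ν :=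
    (hint.sub (hm.const_mul γ)).div_const (γ ^ 2)
  calc ∫⁻ t in Ioi 0, ENNReal.ofReal (Real.exp (γ * t)) * ENNReal.ofReal (nuIbar ν t)
      = ∫⁻ t in Ioi 0, ∫⁻ w in Ioi 0,
          ENNReal.ofReal (Real.exp (γ * t)) * ENNReal.ofReal (w - t) ∂ν := by
        refine setLIntegral_congr_fun measurableSet_Ioi fun t ht => ?_
        rw [ofReal_nuIbar hm (le_of_lt ht), lintegral_const_mul' _ _ ENNReal.ofReal_ne_top]
    _ = ∫⁻ w in Ioi 0, (∫⁻ t in Ioi 0,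
          ENNReal.ofReal (Real.exp (γ * t)) * ENNReal.ofReal (w - t)) ∂ν :=
        lintegral_lintegral_swap (Measurable.aemeasurable (by
          change Measurable fun p : ℝ × ℝ =>
            ENNReal.ofReal (Real.exp (γ * p.1)) * ENNReal.ofReal (p.2 - p.1)
          fun_prop))
    _ = ∫⁻ w in Ioi 0, ENNReal.ofReal ((Real.exp (γ * w) - 1 - γ * w) / γ ^ 2) ∂ν :=
        setLIntegral_congr_fun measurableSet_Ioi fun w (hw : 0 < w) =>
          lintegral_exp_mul_ofReal_sub hγ hw.le
    _ = _ := by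
        rw [← ofReal_integral_eq_lintegral_ofReal hφ (ae_of_all _ fun w =>
          div_nonneg (by linarith [Real.add_one_le_exp (γ * w)]) (sq_nonneg γ)),
          integral_div, integral_sub hint (hm.const_mul γ), integral_const_mul]

end FirstMoment

lemma measurable_setLIntegral_Ioc {F : ℝ → ℝ → ℝ≥0∞} (hF : Measurable (Function.uncurry F))
    (a : ℝ) : Measurable fun x => ∫⁻ t in Ioc a x, F x t := by
  simp_rw [← lintegral_indicator measurableSet_Ioc]
  exact (hF.indicator (measurableSet_lt measurable_const measurable_snd |>.inter
    (measurableSet_le measurable_snd measurable_fst))).lintegral_prod_right'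

theorem lintegral_exp_mul_convolution (s : ℝ) {f g : ℝ → ℝ≥0∞} (hf : Measurable f)
    (hg : Measurable g) :
    ∫⁻ x in Ioi 0, ENNReal.ofReal (Real.exp (s * x)) * ∫⁻ t in Ioc 0 x, f (x - t) * g t
      = (∫⁻ u in Ici 0, ENNReal.ofReal (Real.exp (s * u)) * f u)
        * ∫⁻ t in Ioi 0, ENNReal.ofReal (Real.exp (s * t)) * g t := by
  set e : ℝ → ℝ≥0∞ := fun x => ENNReal.ofReal (Real.exp (s * x))
  set A := ∫⁻ u in Ici 0, e u * f u
  have inner (t : ℝ) (ht : 0 < t) :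
      ∫⁻ x in Ioi 0, (Ici t).indicator (fun x => e x * f (x - t)) x = e t * A := by
    rw [lintegral_indicator measurableSet_Ici, Measure.restrict_restrict measurableSet_Ici,
      inter_eq_left.2 (Ici_subset_Ioi.2 ht),
      ← (measurePreserving_add_right volume t).setLIntegral_comp_preimage_emb
        (measurableEmbedding_addRight t), preimage_add_const_Ici, sub_self,
      ← lintegral_const_mul' _ _ ENNReal.ofReal_ne_top]
    refine lintegral_congr fun u => ?_
    simp only [e, add_sub_cancel_right, mul_add, Real.exp_add,
      ENNReal.ofReal_mul (Real.exp_nonneg _)]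
    ring
  calc ∫⁻ x in Ioi 0, e x * ∫⁻ t in Ioc 0 x, f (x - t) * g t
      = ∫⁻ x in Ioi 0, ∫⁻ t in Ioi 0, (Ici t).indicator (fun x => e x * f (x - t)) x * g t := by
        refine lintegral_congr fun x => ?_
        rw [← lintegral_const_mul' _ _ ENNReal.ofReal_ne_top, ← Iic_inter_Ioi,
          ← Measure.restrict_restrict measurableSet_Iic,
          ← lintegral_indicator measurableSet_Iic]
        refine lintegral_congr fun t => ?_
        by_cases htx : t ≤ x <;> simp [htx, mul_assoc, e]
    _ = ∫⁻ t in Ioi 0, ∫⁻ x in Ioi 0, (Ici t).indicator (fun x => e x * f (x - t)) x * g t := by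
        refine lintegral_lintegral_swap (Measurable.aemeasurable ?_)
        exact ((Measurable.indicator (by fun_prop)
          (measurableSet_le measurable_snd measurable_fst)).mul (hg.comp measurable_snd))
    _ = ∫⁻ t in Ioi 0, e t * g t * A := by
        refine setLIntegral_congr_fun measurableSet_Ioi fun t ht => ?_
        rw [lintegral_mul_const _ ((by fun_prop : Measurable _).indicator measurableSet_Ici),
          inner t ht]
        ring
    _ = A * ∫⁻ t in Ioi 0, e t * g t := by
        rw [lintegral_mul_const _ (by fun_prop), mul_comm]

lemma lintegral_exp_mul_exp_neg_mul {β γ : ℝ} (h : γ < β) :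
    ∫⁻ x in Ioi 0, ENNReal.ofReal (Real.exp (γ * x)) * ENNReal.ofReal (Real.exp (-β * x))
      = ENNReal.ofReal (1 / (β - γ)) := by
  have hexp (x : ℝ) : ENNReal.ofReal (Real.exp (γ * x)) * ENNReal.ofReal (Real.exp (-β * x))
      = ENNReal.ofReal (Real.exp ((γ - β) * x)) := by
    rw [← ENNReal.ofReal_mul (Real.exp_nonneg _), ← Real.exp_add]
    ring_nf
  simp_rw [hexp]
  rw [← ofReal_integral_eq_lintegral_ofReal (integrableOn_exp_mul_Ioi (sub_neg.2 h) 0)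
    (ae_of_all _ fun _ => Real.exp_nonneg _), integral_exp_mul_Ioi (sub_neg.2 h) 0]
  congr 1
  rw [mul_zero, Real.exp_zero, neg_div, ← div_neg, neg_sub]

lemma kDens_nonneg {c D : ℝ} (hc : 0 ≤ c) (hD : 0 ≤ D) (u : ℝ) : 0 ≤ kDens c D u :=
  mul_nonneg (div_nonneg hc hD) (Real.exp_nonneg _)

lemma kDens_le {c D u : ℝ} (hc : 0 ≤ c) (hD : 0 ≤ D) (hu : 0 ≤ u) : kDens c D u ≤ c / D :=
  mul_le_of_le_one_right (div_nonneg hc hD) (Real.exp_le_one_iff.2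
    (mul_nonpos_of_nonpos_of_nonneg (neg_nonpos.2 (div_nonneg hc hD)) hu))

lemma lintegral_exp_mul_kDens {c D γ : ℝ} (hc : 0 ≤ c) (hD : 0 ≤ D) (hγ : γ < c / D) :
    ∫⁻ u in Ici 0, ENNReal.ofReal (Real.exp (γ * u)) * ENNReal.ofReal (kDens c D u)
      = ENNReal.ofReal (c / D) * ENNReal.ofReal (1 / (c / D - γ)) := by
  rw [setLIntegral_congr Ioi_ae_eq_Ici.symm, ← lintegral_exp_mul_exp_neg_mul hγ,
    ← lintegral_const_mul' _ _ ENNReal.ofReal_ne_top]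
  refine lintegral_congr fun u => ?_
  rw [kDens, ENNReal.ofReal_mul (div_nonneg hc hD), neg_mul]
  ring

section RenewalTerm

variable {c D : ℝ} {ν : Measure ℝ}

lemma renH_conv_nonneg (hc : 0 ≤ c) (hD : 0 ≤ D) {x : ℝ} (hx : 0 ≤ x) :
    0 ≤ (1 / c) * ∫ t in (0 : ℝ)..x, kDens c D (x - t) * nuIbar ν t :=
  mul_nonneg (one_div_nonneg.2 hc) (intervalIntegral.integral_nonneg hx fun _ _ =>
    mul_nonneg (kDens_nonneg hc hD _) (nuIbar_nonneg ν _))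

lemma renH_nonneg (hc : 0 ≤ c) (hD : 0 ≤ D) {x : ℝ} (hx : 0 ≤ x) : 0 ≤ renH c D ν x :=
  add_nonneg (renH_conv_nonneg hc hD hx) (Real.exp_nonneg _)

lemma ofReal_renH (hc : 0 ≤ c) (hD : 0 ≤ D) (hm : IntegrableOn (fun z => z) (Ioi 0) ν)
    {x : ℝ} (hx : 0 ≤ x) :
    ENNReal.ofReal (renH c D ν x)
      = ENNReal.ofReal (1 / c)
          * (∫⁻ t in Ioc 0 x, ENNReal.ofReal (kDens c D (x - t)) * ENNReal.ofReal (nuIbar ν t))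
        + ENNReal.ofReal (Real.exp (-(c / D) * x)) := by
  have hnn (t : ℝ) : 0 ≤ kDens c D (x - t) * nuIbar ν t :=
    mul_nonneg (kDens_nonneg hc hD _) (nuIbar_nonneg ν _)
  have hint : IntegrableOn (fun t => kDens c D (x - t) * nuIbar ν t) (Ioc 0 x) := by
    refine IntegrableOn.of_bound measure_Ioc_lt_top
      ((by unfold kDens; fun_prop : Measurable fun t => kDens c D (x - t)).mul
        (measurable_nuIbar ν)).aestronglyMeasurable
      (c / D * ∫ z in Ioi 0, z ∂ν)
      ((ae_restrict_iff' measurableSet_Ioc).2 (ae_of_all _ fun t ht => ?_))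
    rw [Real.norm_of_nonneg (hnn t)]
    exact mul_le_mul (kDens_le hc hD (sub_nonneg.2 ht.2)) (nuIbar_le hm ht.1.le)
      (nuIbar_nonneg ν _) (div_nonneg hc hD)
  rw [renH, ENNReal.ofReal_add (renH_conv_nonneg hc hD hx) (Real.exp_nonneg _),
    intervalIntegral.integral_of_le hx, ENNReal.ofReal_mul (one_div_nonneg.2 hc),
    ofReal_integral_eq_lintegral_ofReal hint (ae_of_all _ hnn)]
  simp_rw [ENNReal.ofReal_mul (kDens_nonneg hc hD _)]

lemma aemeasurable_ofReal_renH (hc : 0 ≤ c) (hD : 0 ≤ D)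
    (hm : IntegrableOn (fun z => z) (Ioi 0) ν) :
    AEMeasurable (fun x => ENNReal.ofReal (renH c D ν x)) (volume.restrict (Ioi 0)) := by
  refine AEMeasurable.congr (Measurable.aemeasurable ?_) ((ae_restrict_iff' measurableSet_Ioi).2
    (ae_of_all _ fun x (hx : 0 < x) => (ofReal_renH hc hD hm hx.le).symm))
  have := measurable_nuIbar ν
  exact ((measurable_setLIntegral_Ioc (by unfold kDens; fun_prop) 0).const_mul _).add
    (by fun_prop)

lemma lintegral_exp_mul_renH [SFinite ν] {γ : ℝ} (hc : 0 ≤ c) (hD : 0 ≤ D)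
    (hm : IntegrableOn (fun z => z) (Ioi 0) ν) (hγ0 : γ ≠ 0) (hγ : γ < c / D)
    (hint : IntegrableOn (fun z => Real.exp (γ * z) - 1) (Ioi 0) ν) :
    ∫⁻ x in Ioi 0, ENNReal.ofReal (Real.exp (γ * x)) * ENNReal.ofReal (renH c D ν x)
      = ENNReal.ofReal (1 / c * (c / D * (1 / (c / D - γ))
          * (((∫ z in Ioi 0, (Real.exp (γ * z) - 1) ∂ν) - γ * ∫ z in Ioi 0, z ∂ν) / γ ^ 2))
        + 1 / (c / D - γ)) := by
  have hA := div_nonneg (sub_nonneg.2 (mul_integral_le_integral_exp_mul_sub_one hm hint))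
    (sq_nonneg γ)
  have hβγ : 0 < c / D - γ := sub_pos.2 hγ
  have hrenH : ∀ x ∈ Ioi (0 : ℝ),
      ENNReal.ofReal (Real.exp (γ * x)) * ENNReal.ofReal (renH c D ν x)
        = ENNReal.ofReal (1 / c) * (ENNReal.ofReal (Real.exp (γ * x)) *
            ∫⁻ t in Ioc 0 x, ENNReal.ofReal (kDens c D (x - t)) * ENNReal.ofReal (nuIbar ν t))
          + ENNReal.ofReal (Real.exp (γ * x)) * ENNReal.ofReal (Real.exp (-(c / D) * x)) :=
    fun x (hx : 0 < x) => by rw [ofReal_renH hc hD hm hx.le]; ring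
  rw [setLIntegral_congr_fun measurableSet_Ioi hrenH, lintegral_add_right _ (by fun_prop),
    lintegral_const_mul' _ _ ENNReal.ofReal_ne_top,
    lintegral_exp_mul_convolution _ (f := fun u => ENNReal.ofReal (kDens c D u))
      (by unfold kDens; fun_prop) (measurable_nuIbar ν).ennreal_ofReal,
    lintegral_exp_mul_kDens hc hD hγ, lintegral_exp_mul_nuIbar hm hint hγ0,
    lintegral_exp_mul_exp_neg_mul hγ, ← ENNReal.ofReal_mul (by positivity),
    ← ENNReal.ofReal_mul (by positivity), ← ENNReal.ofReal_mul (by positivity),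
    ← ENNReal.ofReal_add (by positivity) (by positivity)]

theorem integral_exp_mul_renH [SFinite ν] {γ : ℝ} (hc : 0 < c) (hD : 0 < D)
    (hm : IntegrableOn (fun z => z) (Ioi 0) ν) (hγ0 : γ ≠ 0) (hγ : γ < c / D)
    (hint : IntegrableOn (fun z => Real.exp (γ * z) - 1) (Ioi 0) ν) :
    ∫ x in Ioi 0, Real.exp (γ * x) * renH c D ν x
      = ((∫ z in Ioi 0, (Real.exp (γ * z) - 1) ∂ν) - γ * ∫ z in Ioi 0, z ∂ν)
          / (γ ^ 2 * (c - D * γ)) + D / (c - D * γ) := by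
  have hcD : c - D * γ ≠ 0 := by
    rw [lt_div_iff₀ hD] at hγ; linarith
  calc ∫ x in Ioi 0, Real.exp (γ * x) * renH c D ν x
      = ∫ x in Ioi 0,
          (ENNReal.ofReal (Real.exp (γ * x)) * ENNReal.ofReal (renH c D ν x)).toReal := by
        refine setIntegral_congr_fun measurableSet_Ioi fun x (hx : 0 < x) => ?_
        rw [ENNReal.toReal_mul, ENNReal.toReal_ofReal (Real.exp_nonneg _),
          ENNReal.toReal_ofReal (renH_nonneg hc.le hD.le hx.le)]
    _ = (∫⁻ x in Ioi 0,
          ENNReal.ofReal (Real.exp (γ * x)) * ENNReal.ofReal (renH c D ν x)).toReal :=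
        integral_toReal (AEMeasurable.mul (by fun_prop) (aemeasurable_ofReal_renH hc.le hD.le hm))
          (ae_of_all _ fun _ => ENNReal.mul_lt_top ENNReal.ofReal_lt_top ENNReal.ofReal_lt_top)
    _ = _ := by
        rw [lintegral_exp_mul_renH hc.le hD.le hm hγ0 hγ hint, ENNReal.toReal_ofReal]
        · field_simp
        · have := mul_integral_le_integral_exp_mul_sub_one hm hint
          have : 0 < c / D - γ := sub_pos.2 hγ
          positivity

end RenewalTerm

/-- The integral of the exponentially tilted inhomogeneous term:
`∫₀^∞ e^{γx} h(x) dx = (1/(γ(c−Dγ)))[(1/γ)∫₀^∞(e^{γz}−1)ν(dz) − m] + D/(c−Dγ)`,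
which simplifies to `(c − m)/(γ(c − Dγ))` under the Lundberg identity. -/
theorem tilted_h_integral
    (c D γ : ℝ) (hc : 0 < c) (hD : 0 < D)
    (ν : Measure ℝ) [SigmaFinite ν]
    (hm_int : IntegrableOn (fun z => z) (Ioi (0 : ℝ)) ν)
    (hγ0 : 0 < γ) (hγ : γ < c / D)
    (hint : IntegrableOn (fun z => Real.exp (γ * z) - 1) (Ioi (0 : ℝ)) ν) :
    (∫ x in Ioi (0 : ℝ), Real.exp (γ * x) * renH c D ν x)
      = (1 / (γ * (c - D * γ)))
          * ((1 / γ) * (∫ z in Ioi (0 : ℝ), (Real.exp (γ * z) - 1) ∂ν)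
              - ∫ z in Ioi (0 : ℝ), z ∂ν)
        + D / (c - D * γ) ∧
      (c * γ - D * γ ^ 2 = (∫ z in Ioi (0 : ℝ), (Real.exp (γ * z) - 1) ∂ν) →
        (∫ x in Ioi (0 : ℝ), Real.exp (γ * x) * renH c D ν x)
          = (c - ∫ z in Ioi (0 : ℝ), z ∂ν) / (γ * (c - D * γ))) := by
  have hcD : c - D * γ ≠ 0 := by
    rw [lt_div_iff₀ hD] at hγ; linarith
  rw [integral_exp_mul_renH hc hD hm_int hγ0.ne' hγ hint]
  refine ⟨by field_simp, fun hL => ?_⟩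
  rw [← hL]
  field_simp
  ring
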